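/- arXiv:1002.0362 — 8 statements merged into one kernel-verified Lean document; each statement's English description precedes it below -/
import Mathlib

section
/- For every positive integer k and every complex number s = σ + it with q_3·k + 4·log 3 ≤ σ ≤ q_2·k − 2, the k-th derivative of the Riemann zeta function does not vanish at s, i.e. iteratedDeriv k riemannZeta s ≠ 0. -/
/-- `q M = log(log M / log(M+1)) / log(M/(M+1))`, the slope of the `M`-th critical line. -/
noncomputable def q (M : ℕ) : ℝ :=
  Real.log (Real.log M / Real.log ((M : ℝ) + 1)) / Real.log ((M : ℝ) / ((M : ℝ) + 1))

/-!
For `Re s > 1` we have `(-1)^k ζ^(k)(s) = ∑ (log n)^k n^(-s)`, and the term `n = 3` dominates the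
sum of the absolute values of all others. With `σ = Re s`, the ratio of the `n`-th to the `M`-th
term is `exp (k (log log n - log log M) - σ (log n - log M))`. By concavity of `log`,
`log log n - log log M ≤ q M (log n - log M)` for `n ≥ M + 1`, with equality at `n = M + 1`.
So the term `n = 2` is `(3/2)^(σ - q 2 k) ≤ 4/9` times the third one, and for `n ≥ 4` the `n`-th
term is at most `(3/n)^(σ - q 3 k) ≤ (3/n)^(13/3)` times it; by `ζ(4) = π^4/90` these add up to
less than `5/9` of the third term.
-/

open Real

lemma q_mul_log_succ_sub_log {M : ℕ} (hM : 2 ≤ M) :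
    q M * (log (M + 1) - log M) = log (log (M + 1)) - log (log M) := by
  have hM1 : (1 : ℝ) < M := by exact_mod_cast hM
  have hlog : 0 < log (M : ℝ) := log_pos hM1
  have hlt : log (M : ℝ) < log (M + 1) := log_lt_log (by linarith) (by linarith)
  have hne : log (M : ℝ) - log (M + 1) ≠ 0 := by linarith
  unfold q
  rw [log_div hlog.ne' (by linarith), log_div (by linarith) (by linarith)]
  field_simp
  ring

lemma q_pos {M : ℕ} (hM : 2 ≤ M) : 0 < q M := by
  have hM1 : (1 : ℝ) < M := by exact_mod_cast hM
  have hlt : log (M : ℝ) < log (M + 1) := log_lt_log (by linarith) (by linarith)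
  have hllt : log (log (M : ℝ)) < log (log (M + 1)) := log_lt_log (log_pos hM1) hlt
  have h := q_mul_log_succ_sub_log hM
  exact pos_of_mul_pos_left (h ▸ sub_pos.mpr hllt) (sub_pos.mpr hlt).le

lemma log_log_sub_le_q_mul {M : ℕ} (hM : 2 ≤ M) {x : ℝ} (hx : M + 1 ≤ x) :
    log (log x) - log (log M) ≤ q M * (log x - log M) := by
  rcases hx.eq_or_lt with rfl | hx
  · exact (q_mul_log_succ_sub_log hM).ge
  have hM1 : (1 : ℝ) < M := by exact_mod_cast hM
  have hlogM : 0 < log (M : ℝ) := log_pos hM1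
  have hlt₁ : log (M : ℝ) < log (M + 1) := log_lt_log (by linarith) (by linarith)
  have hlt₂ : log ((M : ℝ) + 1) < log x := log_lt_log (by linarith) hx
  have hslope := strictConcaveOn_log_Ioi.secant_strict_mono (Set.mem_Ioi.mpr hlogM)
    (Set.mem_Ioi.mpr (hlogM.trans hlt₁)) (Set.mem_Ioi.mpr (hlogM.trans (hlt₁.trans hlt₂)))
    hlt₁.ne' (hlt₁.trans hlt₂).ne' hlt₂
  rw [← q_mul_log_succ_sub_log hM, mul_div_cancel_right₀ _ (sub_pos.mpr hlt₁).ne',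
    div_lt_iff₀ (by linarith)] at hslope
  exact hslope.le

lemma log_pow_div_rpow_eq_exp (k : ℕ) (σ : ℝ) {x : ℝ} (hx : 1 < x) :
    log x ^ k / x ^ σ = exp (k * log (log x) - σ * log x) := by
  rw [exp_sub, exp_nat_mul, exp_log (log_pos hx), rpow_def_of_pos (by linarith), mul_comm σ]

lemma log_pow_div_rpow_eq_succ {M : ℕ} (hM : 2 ≤ M) (k : ℕ) (σ : ℝ) :
    log M ^ k / (M : ℝ) ^ σ
      = ((M + 1) / M) ^ (σ - q M * k) * (log (M + 1) ^ k / ((M : ℝ) + 1) ^ σ) := by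
  have hM1 : (1 : ℝ) < M := by exact_mod_cast hM
  rw [log_pow_div_rpow_eq_exp k σ hM1, log_pow_div_rpow_eq_exp k σ (by linarith),
    rpow_def_of_pos (by positivity), ← exp_add, log_div (by linarith) (by linarith)]
  congr 1
  linear_combination (k : ℝ) * q_mul_log_succ_sub_log hM

lemma log_pow_div_rpow_le {M : ℕ} (hM : 2 ≤ M) (k : ℕ) (σ : ℝ) {x : ℝ} (hx : M + 1 ≤ x) :
    log x ^ k / x ^ σ ≤ (M / x) ^ (σ - q M * k) * (log M ^ k / (M : ℝ) ^ σ) := by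
  have hM1 : (1 : ℝ) < M := by exact_mod_cast hM
  rw [log_pow_div_rpow_eq_exp k σ hM1, log_pow_div_rpow_eq_exp k σ (by linarith),
    rpow_def_of_pos (div_pos (by linarith) (by linarith)), ← exp_add, exp_le_exp,
    log_div (by linarith) (by linarith)]
  linear_combination (k : ℝ) * log_log_sub_le_q_mul hM hx

lemma log_two_pow_div_rpow_le {k : ℕ} {σ : ℝ} (hσ : σ ≤ q 2 * k - 2) :
    log 2 ^ k / (2 : ℝ) ^ σ ≤ 4 / 9 * (log 3 ^ k / (3 : ℝ) ^ σ) := by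
  have h := log_pow_div_rpow_eq_succ le_rfl k σ
  norm_num at h
  rw [h]
  gcongr
  calc ((3 : ℝ) / 2) ^ (σ - q 2 * k) ≤ (3 / 2) ^ (-2 : ℝ) :=
        rpow_le_rpow_of_exponent_le (by norm_num) (by linarith)
    _ = 4 / 9 := by norm_num

lemma rpow_thirteen_thirds_le {t : ℝ} (ht₀ : 0 ≤ t) (ht : t ≤ 3 / 4) :
    t ^ (13 / 3 : ℝ) ≤ 10 / 11 * t ^ 4 := by
  have hcbrt : t ^ ((3 : ℕ) : ℝ)⁻¹ ≤ 10 / 11 := by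
    refine le_of_pow_le_pow_left₀ (n := 3) (by norm_num) (by norm_num) ?_
    rw [rpow_inv_natCast_pow ht₀ (by norm_num)]
    linarith
  rw [show (13 / 3 : ℝ) = (4 : ℕ) + ((3 : ℕ) : ℝ)⁻¹ by norm_num, rpow_add' ht₀ (by norm_num),
    rpow_natCast, mul_comm]
  exact mul_le_mul_of_nonneg_right hcbrt (by positivity)

lemma log_pow_div_rpow_le_of_four_le {k : ℕ} {σ : ℝ} (hσ : q 3 * k + 13 / 3 ≤ σ) {x : ℝ}
    (hx : 4 ≤ x) : log x ^ k / x ^ σ ≤ 810 / 11 / x ^ 4 * (log 3 ^ k / (3 : ℝ) ^ σ) := by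
  have h := log_pow_div_rpow_le (M := 3) (by norm_num) k σ (by norm_num; linarith)
  norm_num at h
  refine h.trans (mul_le_mul_of_nonneg_right ?_ (by positivity))
  calc (3 / x) ^ (σ - q 3 * k) ≤ (3 / x) ^ (13 / 3 : ℝ) :=
        rpow_le_rpow_of_exponent_ge (by positivity) (by rw [div_le_one] <;> linarith)
          (by linarith)
    _ ≤ 10 / 11 * (3 / x) ^ 4 :=
        rpow_thirteen_thirds_le (by positivity) (by rw [div_le_iff₀] <;> linarith)
    _ = 810 / 11 / x ^ 4 := by ring

-- `1393 / 1296 = 1 + 1 / 2 ^ 4 + 1 / 3 ^ 4`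
lemma hasSum_inv_add_four_pow_four :
    HasSum (fun n : ℕ => (((n : ℝ) + 4) ^ 4)⁻¹) (π ^ 4 / 90 - 1393 / 1296) := by
  have h := (hasSum_nat_add_iff' 4).mpr hasSum_zeta_four
  norm_num [Finset.sum_range_succ] at h
  exact h

lemma add_ne_zero_of_norm_lt {E : Type*} [SeminormedAddCommGroup E] {a b : E} (h : ‖b‖ < ‖a‖) :
    a + b ≠ 0 := fun hab => h.ne' (by rw [eq_neg_of_add_eq_zero_left hab, norm_neg])

lemma iterate_logMul_one (k : ℕ) :
    LSeries.logMul^[k] 1 = fun n : ℕ => Complex.log n ^ k := by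
  induction k with
  | zero => funext n; simp
  | succ k ih =>
    funext n
    rw [Function.iterate_succ_apply', ih, LSeries.logMul, pow_succ, mul_comm]

lemma iteratedDeriv_riemannZeta {s : ℂ} (hs : 1 < s.re) (k : ℕ) :
    iteratedDeriv k riemannZeta s = (-1) ^ k * LSeries (fun n : ℕ => Complex.log n ^ k) s := by
  have hEqOn : Set.EqOn (LSeries 1) riemannZeta {z : ℂ | 1 < z.re} :=
    fun _ hz => LSeries_one_eq_riemannZeta hz
  rw [← hEqOn.iteratedDeriv_of_isOpen (isOpen_lt continuous_const Complex.continuous_re) k hs,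
    LSeries_iteratedDeriv k (by rw [LSeries.abscissaOfAbsConv_one]; exact_mod_cast hs),
    iterate_logMul_one]

lemma LSeriesSummable_log_pow {s : ℂ} (hs : 1 < s.re) (k : ℕ) :
    LSeriesSummable (fun n : ℕ => Complex.log n ^ k) s := by
  rw [← iterate_logMul_one]
  refine LSeriesSummable_of_abscissaOfAbsConv_lt_re ?_
  rw [LSeries.absicssaOfAbsConv_logPowMul, LSeries.abscissaOfAbsConv_one]
  exact_mod_cast hs

lemma LSeries_log_pow_eq_term_three_add {k : ℕ} (hk : k ≠ 0) {s : ℂ} (hs : 1 < s.re) :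
    LSeries (fun n : ℕ => Complex.log n ^ k) s
      = LSeries.term (fun n : ℕ => Complex.log n ^ k) s 3
        + (LSeries.term (fun n : ℕ => Complex.log n ^ k) s 2
          + ∑' n : ℕ, LSeries.term (fun n : ℕ => Complex.log n ^ k) s (n + 4)) := by
  have hterm₁ : LSeries.term (fun n : ℕ => Complex.log n ^ k) s 1 = 0 := by
    simp [LSeries.term, hk]
  rw [LSeries, ← (LSeriesSummable_log_pow hs k).sum_add_tsum_nat_add 4, Finset.sum_range_succ,
    Finset.sum_range_succ, Finset.sum_range_succ, Finset.sum_range_one, LSeries.term_zero, hterm₁]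
  ring

lemma norm_term_log_pow (k : ℕ) (s : ℂ) {n : ℕ} (hn : n ≠ 0) :
    ‖LSeries.term (fun n : ℕ => Complex.log n ^ k) s n‖ = log n ^ k / (n : ℝ) ^ s.re := by
  rw [LSeries.norm_term_eq, if_neg hn, norm_pow, ← Complex.ofReal_natCast, ← Complex.ofReal_log
    n.cast_nonneg, Complex.norm_real, norm_of_nonneg (log_natCast_nonneg n)]

lemma norm_tsum_term_log_pow_add_four_le {k : ℕ} {s : ℂ} (hσ : q 3 * k + 13 / 3 ≤ s.re) :
    ‖∑' n : ℕ, LSeries.term (fun n : ℕ => Complex.log n ^ k) s (n + 4)‖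
      ≤ 810 / 11 * (π ^ 4 / 90 - 1393 / 1296) * (log 3 ^ k / (3 : ℝ) ^ s.re) := by
  rw [mul_right_comm]
  refine tsum_of_norm_bounded (hasSum_inv_add_four_pow_four.mul_left _) fun n => ?_
  rw [norm_term_log_pow k s (n + 3).succ_ne_zero]
  convert log_pow_div_rpow_le_of_four_le hσ (x := n + 4) (by linarith [n.cast_nonneg (α := ℝ)])
    using 1
  · push_cast; ring_nf
  · ring

/-- For every positive integer `k` and every complex `s` with
`q 3 * k + 4 log 3 ≤ Re s ≤ q 2 * k - 2`, the `k`-th derivative of the Riemann zeta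
function does not vanish at `s`. -/
theorem zeta_deriv_ne_zero_M3 (k : ℕ) (hk : 1 ≤ k) (s : ℂ)
    (h1 : q 3 * k + 4 * Real.log 3 ≤ s.re)
    (h2 : s.re ≤ q 2 * k - 2) :
    iteratedDeriv k riemannZeta s ≠ 0 := by
  have hσ : q 3 * k + 13 / 3 ≤ s.re := by linarith [log_three_gt_d9]
  have hs : 1 < s.re := by linarith [mul_nonneg (q_pos (M := 3) (by norm_num)).le k.cast_nonneg]
  have hπ : π ^ 4 / 90 - 1393 / 1296 < 11 / 1458 := by
    linarith [pow_lt_pow_left₀ pi_lt_d4 pi_pos.le (by norm_num : 4 ≠ 0)]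
  set T := log 3 ^ k / (3 : ℝ) ^ s.re
  have hT : 0 < T := by positivity
  rw [iteratedDeriv_riemannZeta hs, LSeries_log_pow_eq_term_three_add (by omega) hs]
  refine mul_ne_zero (by simp) (add_ne_zero_of_norm_lt ?_)
  calc _ ≤ 4 / 9 * T + 810 / 11 * (π ^ 4 / 90 - 1393 / 1296) * T := by
        refine (norm_add_le _ _).trans (add_le_add ?_ (norm_tsum_term_log_pow_add_four_le hσ))
        rw [norm_term_log_pow k s two_ne_zero]
        exact_mod_cast log_two_pow_div_rpow_le h2
    _ < T := by nlinarith
    _ = _ := by rw [norm_term_log_pow k s three_ne_zero]; norm_num [T]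
end

section
/- For a positive integer k, let c(k) denote the number of integers M ≥ 2 such that the critical strip S_M^k exists, i.e. q_{M+1}·k + (M+2)·log 3 < q_M·k − (M+1)·log 3. Then there exists K such that for all integers k ≥ K one has √k/(3·log k) < c(k) < 2·√k/log k. -/
/-!
With `L_M = log M`, `q M = (log L_{M+1} - log L_M) / (L_{M+1} - L_M)` is a difference quotient
of `log`, so it lies between `2 / (L_M + L_{M+1})` (the logarithmic mean is at most the
arithmetic mean) and `1 / L_M`. Hence `q M - q (M+1)` is of order `1 / (M L_M^2)`, and the strip
`S_M^k`, which exists iff `(2M+3) log 3 < (q M - q (M+1)) k`, exists for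
`2 ≤ M ≤ √k / (4 log √k)` and for no `M ≥ √k / log √k`, once `k` is large.
-/

open Real Filter

/-- `c k` is the number of integers `M ≥ 2` for which the critical strip `S_M^k` exists. -/
noncomputable def numCriticalStrips (k : ℕ) : ℕ :=
  {M : ℕ | 2 ≤ M ∧
    q (M + 1) * k + ((M : ℝ) + 2) * Real.log 3 <
      q M * k - ((M : ℝ) + 1) * Real.log 3}.ncard

namespace Real

theorem two_mul_sub_div_add_le_log_sub_log {x y : ℝ} (hx : 0 < x) (hxy : x ≤ y) :
    2 * (y - x) / (x + y) ≤ log y - log x := by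
  have hy : 0 < y := by linarith
  have hxy0 : 0 < x + y := by linarith
  set z := (y - x) / (x + y)
  have hz0 : 0 ≤ z := div_nonneg (by linarith) hxy0.le
  have hz1 : z < 1 := (div_lt_one hxy0).mpr (by linarith)
  have h1z : 1 + z = 2 * y / (x + y) := by simp only [z]; field_simp; ring
  have h1z' : 1 - z = 2 * x / (x + y) := by simp only [z]; field_simp; ring
  -- `2 z` is the first term of the nonnegative series
  -- `log (1 + z) - log (1 - z) = ∑ 2 z ^ (2j+1) / (2j+1)`
  calc 2 * (y - x) / (x + y) = 2 * (1 / (2 * ((0 : ℕ) : ℝ) + 1)) * z ^ (2 * 0 + 1) := by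
        simp only [z]; norm_num; ring
    _ ≤ log (1 + z) - log (1 - z) :=
        le_hasSum (hasSum_log_sub_log_of_abs_lt_one (abs_lt.mpr ⟨by linarith, hz1⟩)) 0
          fun j _ => by positivity
    _ = log y - log x := by
        rw [h1z, h1z', log_div (by positivity) hxy0.ne', log_div (by positivity) hxy0.ne',
          log_mul two_ne_zero hy.ne', log_mul two_ne_zero hx.ne']
        ring

theorem two_div_add_le_slope_log {x y : ℝ} (hx : 0 < x) (hxy : x < y) :
    2 / (x + y) ≤ (log y - log x) / (y - x) := by
  rw [le_div_iff₀ (by linarith)]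
  calc 2 / (x + y) * (y - x) = 2 * (y - x) / (x + y) := by ring
    _ ≤ _ := two_mul_sub_div_add_le_log_sub_log hx hxy.le

theorem slope_log_le_one_div {x y : ℝ} (hx : 0 < x) (hxy : x < y) :
    (log y - log x) / (y - x) ≤ 1 / x := by
  have hy : 0 < y := by linarith
  rw [div_le_div_iff₀ (by linarith) hx, ← log_div hy.ne' hx.ne']
  calc log (y / x) * x ≤ (y / x - 1) * x := by
        gcongr; exact log_le_sub_one_of_pos (by positivity)
    _ = 1 * (y - x) := by field_simp

theorem one_div_add_one_le_log_add_one_sub_log {x : ℝ} (hx : 0 < x) :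
    1 / (x + 1) ≤ log (x + 1) - log x := by
  rw [← log_div (by positivity) hx.ne']
  calc 1 / (x + 1) = 1 - ((x + 1) / x)⁻¹ := by field_simp; ring
    _ ≤ _ := one_sub_inv_le_log_of_pos (by positivity)

theorem log_add_sub_log_le {x h : ℝ} (hx : 0 < x) (hh : 0 ≤ h) :
    log (x + h) - log x ≤ h / x := by
  rw [← log_div (by positivity) hx.ne']
  calc log ((x + h) / x) ≤ (x + h) / x - 1 := log_le_sub_one_of_pos (by positivity)
    _ = h / x := by field_simp; ring

end Real

theorem q_eq_slope {M : ℕ} (hM : 2 ≤ M) :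
    q M = (log (log (M + 1)) - log (log M)) / (log (M + 1) - log M) := by
  have hM1 : (1 : ℝ) < M := by exact_mod_cast hM
  have hL : 0 < log (M : ℝ) := log_pos hM1
  have hL' : 0 < log ((M : ℝ) + 1) := log_pos (by linarith)
  rw [q, log_div hL.ne' hL'.ne', log_div (by positivity) (by positivity), ← neg_sub,
    ← neg_sub (log (M : ℝ)), neg_div, div_neg]

section
variable {M : ℕ}

theorem q_le_one_div_log (hM : 2 ≤ M) : q M ≤ 1 / log M := by
  have hM1 : (1 : ℝ) < M := by exact_mod_cast hM
  rw [q_eq_slope hM]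
  exact slope_log_le_one_div (log_pos hM1) (log_lt_log (by linarith) (by linarith))

theorem two_div_le_q (hM : 2 ≤ M) : 2 / (log M + log (M + 1)) ≤ q M := by
  have hM1 : (1 : ℝ) < M := by exact_mod_cast hM
  rw [q_eq_slope hM]
  exact two_div_add_le_slope_log (log_pos hM1) (log_lt_log (by linarith) (by linarith))

theorem one_div_le_q_sub_q_succ (hM : 2 ≤ M) :
    1 / (2 * (M + 1) * log (M + 1) ^ 2) ≤ q M - q (M + 1) := by
  have hM1 : (1 : ℝ) < M := by exact_mod_cast hM
  set L := log (M : ℝ)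
  set L' := log ((M : ℝ) + 1)
  have hL : 0 < L := log_pos hM1
  have hLL' : L < L' := log_lt_log (by linarith) (by linarith)
  have hL' : 0 < L' := by linarith
  have hq : 2 / (L + L') ≤ q M := two_div_le_q hM
  have hq' : q (M + 1) ≤ 1 / L' := by
    simpa only [Nat.cast_add, Nat.cast_one] using q_le_one_div_log (M := M + 1) (by omega)
  have ha : 1 / ((M : ℝ) + 1) ≤ L' - L := one_div_add_one_le_log_add_one_sub_log (by linarith)
  calc 1 / (2 * (M + 1) * L' ^ 2) = 1 / ((M : ℝ) + 1) / (2 * L' ^ 2) := by field_simp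
    _ ≤ (L' - L) / (L' * (L + L')) :=
        div_le_div₀ (by linarith) ha (by positivity) (by nlinarith)
    _ = 2 / (L + L') - 1 / L' := by field_simp; ring
    _ ≤ q M - q (M + 1) := by linarith

theorem q_sub_q_succ_le (hM : 2 ≤ M) : q M - q (M + 1) ≤ 3 / (2 * M * log M ^ 2) := by
  have hM1 : (1 : ℝ) < M := by exact_mod_cast hM
  set L := log (M : ℝ)
  set L' := log ((M : ℝ) + 1)
  set L'' := log ((M : ℝ) + 2)
  have hL : 0 < L := log_pos hM1
  have hLL' : L < L' := log_lt_log (by linarith) (by linarith)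
  have hL'L'' : L' < L'' := log_lt_log (by linarith) (by linarith)
  have hL' : 0 < L' := by linarith
  have hL'' : 0 < L'' := by linarith
  have hq : q M ≤ 1 / L := q_le_one_div_log hM
  have hq' : 2 / (L' + L'') ≤ q (M + 1) := by
    have := two_div_le_q (M := M + 1) (by omega)
    push_cast at this
    rwa [add_assoc, one_add_one_eq_two] at this
  have ha : L' - L ≤ 1 / M := log_add_sub_log_le (by linarith) zero_le_one
  have ha' : L'' - L ≤ 2 / M := log_add_sub_log_le (by linarith) zero_le_two
  calc q M - q (M + 1) ≤ 1 / L - 2 / (L' + L'') := by linarith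
    _ = ((L' - L) + (L'' - L)) / (L * (L' + L'')) := by field_simp; ring
    _ ≤ (1 / M + 2 / M) / (L * (2 * L)) := by
        gcongr; linarith
    _ = 3 / (2 * M * L ^ 2) := by field_simp; ring

end

def CriticalStripExists (k M : ℕ) : Prop :=
  q (M + 1) * k + ((M : ℝ) + 2) * Real.log 3 < q M * k - ((M : ℝ) + 1) * Real.log 3

theorem criticalStripExists_iff {k M : ℕ} :
    CriticalStripExists k M ↔ (2 * M + 3) * log 3 < (q M - q (M + 1)) * k := by
  unfold CriticalStripExists
  constructor <;> intro h <;> linarith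

section
variable {k M : ℕ}

theorem criticalStripExists_of_le (hM : 2 ≤ M)
    (hk : 4 * (2 * M + 3) * (M + 1) * log (M + 1) ^ 2 ≤ (k : ℝ)) :
    CriticalStripExists k M := by
  have hM1 : (1 : ℝ) < M := by exact_mod_cast hM
  have hL' : 0 < log ((M : ℝ) + 1) := log_pos (by linarith)
  have hΔ := one_div_le_q_sub_q_succ hM
  rw [criticalStripExists_iff]
  calc (2 * M + 3) * log 3 < (2 * M + 3) * 2 := by
        gcongr; linarith [log_three_lt_d9]
    _ ≤ 1 / (2 * (M + 1) * log (M + 1) ^ 2) * k := by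
        rw [one_div_mul_eq_div, le_div_iff₀ (by positivity)]
        linarith
    _ ≤ (q M - q (M + 1)) * k := by gcongr

theorem sq_mul_log_lt_of_criticalStripExists (hM : 2 ≤ M) (h : CriticalStripExists k M) :
    4 * (M * log M) ^ 2 < 3 * k := by
  have hM1 : (1 : ℝ) < M := by exact_mod_cast hM
  have hL : 0 < log (M : ℝ) := log_pos hM1
  have hΔ := q_sub_q_succ_le hM
  rw [criticalStripExists_iff] at h
  have h3 : 2 * M + 3 < 3 / (2 * M * log M ^ 2) * k :=
    calc (2 * M + 3 : ℝ) ≤ (2 * M + 3) * log 3 := by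
          apply le_mul_of_one_le_right (by positivity); linarith [log_three_gt_d9]
      _ < (q M - q (M + 1)) * k := h
      _ ≤ 3 / (2 * M * log M ^ 2) * k := by gcongr
  rw [div_mul_eq_mul_div, lt_div_iff₀ (by positivity)] at h3
  nlinarith [sq_nonneg (M * log M)]

end

section
variable {k M : ℕ} {s : ℝ}

theorem criticalStripExists_of_le_div_log (hks : (k : ℝ) = s ^ 2) (hℓ : 1 ≤ log s)
    (hs : 24 * log s ≤ s) (hM : 2 ≤ M) (hMs : M ≤ s / (4 * log s)) :
    CriticalStripExists k M := by
  set ℓ := log s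
  have hMℓ : M * ℓ ≤ s / 4 := by
    rw [le_div_iff₀ (by positivity)] at hMs; linarith
  have hMs' : (M : ℝ) + 1 ≤ s := by nlinarith
  have hlog : log ((M : ℝ) + 1) ≤ ℓ := log_le_log (by positivity) hMs'
  have hlog0 : 0 ≤ log ((M : ℝ) + 1) := log_nonneg (by linarith)
  apply criticalStripExists_of_le hM
  calc 4 * (2 * M + 3) * (M + 1) * log (M + 1) ^ 2
      ≤ 4 * (2 * M + 3) * (M + 1) * ℓ ^ 2 := by gcongr
    _ = 4 * (2 * (M * ℓ) + 3 * ℓ) * (M * ℓ + ℓ) := by ring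
    _ ≤ 4 * (s / 2 + 3 * ℓ) * (s / 4 + ℓ) := by gcongr <;> linarith
    _ ≤ s ^ 2 := by nlinarith
    _ = k := hks.symm

theorem lt_div_log_of_criticalStripExists (hks : (k : ℝ) = s ^ 2) (hs : 0 < s)
    (hℓ : 0 < log s) (hlogℓ : log (log s) ≤ log s / 8) (hM : 2 ≤ M)
    (h : CriticalStripExists k M) : (M : ℝ) < s / log s := by
  set ℓ := log s
  by_contra! hle
  have hlogM : 7 / 8 * ℓ ≤ log M := by
    calc 7 / 8 * ℓ ≤ log (s / ℓ) := by rw [log_div hs.ne' hℓ.ne']; linarith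
      _ ≤ log M := log_le_log (by positivity) hle
  have hMlog : 7 / 8 * s ≤ M * log M :=
    calc 7 / 8 * s = s / ℓ * (7 / 8 * ℓ) := by field_simp
      _ ≤ M * log M := by gcongr
  have := sq_mul_log_lt_of_criticalStripExists hM h
  nlinarith

end

theorem numCriticalStrips_bounds_of_forall {k m : ℕ} {X : ℝ} (hX : 0 < X)
    (hlow : ∀ M, 2 ≤ M → M ≤ m → CriticalStripExists k M)
    (hup : ∀ M, 2 ≤ M → CriticalStripExists k M → (M : ℝ) < X) :
    (m : ℝ) - 1 ≤ numCriticalStrips k ∧ (numCriticalStrips k : ℝ) < X := by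
  set S := {M : ℕ | 2 ≤ M ∧ CriticalStripExists k M}
  have hSup : S ⊆ Finset.Ico 2 ⌈X⌉₊ := fun M ⟨hM, hMS⟩ =>
    Finset.mem_Ico.mpr ⟨hM, Nat.lt_ceil.mpr (hup M hM hMS)⟩
  have hSlow : (Finset.Icc 2 m : Set ℕ) ⊆ S := fun M hM =>
    have hM := Finset.mem_Icc.mp hM
    ⟨hM.1, hlow M hM.1 hM.2⟩
  have hcard_up := Set.ncard_le_ncard hSup (Finset.finite_toSet _)
  have hcard_low := Set.ncard_le_ncard hSlow ((Finset.finite_toSet _).subset hSup)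
  rw [Set.ncard_coe_finset, Nat.card_Ico] at hcard_up
  rw [Set.ncard_coe_finset, Nat.card_Icc] at hcard_low
  change (m : ℝ) - 1 ≤ S.ncard ∧ (S.ncard : ℝ) < X
  constructor
  · have : m ≤ S.ncard + 1 := by omega
    have : (m : ℝ) ≤ S.ncard + 1 := by exact_mod_cast this
    linarith
  · have : S.ncard + 1 ≤ ⌈X⌉₊ := by have := Nat.ceil_pos.mpr hX; omega
    have : (S.ncard : ℝ) + 1 ≤ ⌈X⌉₊ := by exact_mod_cast this
    linarith [Nat.ceil_lt_add_one hX.le]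

theorem numCriticalStrips_bounds_of_log_sqrt {k : ℕ} (hℓ : 1 ≤ log √k)
    (hs : 24 * log √k ≤ √k) (hlogℓ : log (log √k) ≤ log √k / 8) :
    √k / (3 * log k) < numCriticalStrips k ∧
      (numCriticalStrips k : ℝ) < 2 * √k / log k := by
  set s := √(k : ℝ)
  have hks : (k : ℝ) = s ^ 2 := (sq_sqrt (Nat.cast_nonneg k)).symm
  have hlogk : log (k : ℝ) = 2 * log s := by rw [log_sqrt (Nat.cast_nonneg k)]; ring
  have hs0 : 0 < s := by linarith
  obtain ⟨hlow, hup⟩ := numCriticalStrips_bounds_of_forall (k := k)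
    (m := ⌊s / (4 * log s)⌋₊) (X := s / log s) (by positivity)
    (fun M hM hMm => criticalStripExists_of_le_div_log hks hℓ hs hM
      ((Nat.cast_le.mpr hMm).trans (Nat.floor_le (by positivity))))
    (fun M hM h => lt_div_log_of_criticalStripExists hks hs0 (by linarith) hlogℓ hM h)
  rw [hlogk]
  constructor
  · have := Nat.lt_floor_add_one (s / (4 * log s))
    have h24 : 2 ≤ s / (12 * log s) := by rw [le_div_iff₀ (by positivity)]; linarith
    calc s / (3 * (2 * log s)) = s / (4 * log s) - s / (12 * log s) := by field_simp; ring
      _ < _ := by linarith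
  · calc (numCriticalStrips k : ℝ) < s / log s := hup
      _ = 2 * s / (2 * log s) := by field_simp

theorem eventually_log_bounds :
    ∀ᶠ s : ℝ in atTop, 1 ≤ log s ∧ 24 * log s ≤ s ∧ log (log s) ≤ log s / 8 := by
  have hlog := isLittleO_log_id_atTop
  filter_upwards [tendsto_log_atTop.eventually_ge_atTop 1, eventually_ge_atTop 0,
    hlog.bound (c := 1 / 24) (by norm_num),
    tendsto_log_atTop.eventually (hlog.bound (c := 1 / 8) (by norm_num))] with s h1 h0 h24 h8
  have hℓ : 0 ≤ log s := by linarith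
  simp only [norm_eq_abs, id, abs_of_nonneg h0, abs_of_nonneg hℓ] at h24 h8
  exact ⟨h1, by linarith, by linarith [le_abs_self (log (log s))]⟩

/-- For all sufficiently large `k`, the number `c(k)` of critical strips of the `k`-th
derivative of the Riemann zeta function satisfies `√k/(3 log k) < c(k) < 2√k/log k`. -/
theorem numCriticalStrips_bounds :
    ∃ K : ℕ, ∀ k : ℕ, K ≤ k →
      Real.sqrt k / (3 * Real.log k) < (numCriticalStrips k : ℝ) ∧
      (numCriticalStrips k : ℝ) < 2 * Real.sqrt k / Real.log k := by
  have hsqrt : Tendsto (fun k : ℕ => √(k : ℝ)) atTop atTop :=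
    tendsto_sqrt_atTop.comp tendsto_natCast_atTop_atTop
  obtain ⟨K, hK⟩ := eventually_atTop.mp (hsqrt.eventually eventually_log_bounds)
  refine ⟨K, fun k hk => ?_⟩
  obtain ⟨hℓ, hs, hlogℓ⟩ := hK k hk
  exact numCriticalStrips_bounds_of_log_sqrt hℓ hs hlogℓ
end

section
/- For every integer n ≥ 3, one has 1/log n < q_{n−1} < 1/log n + 2/(3·(log n)^2), where q_{n−1} = log(log(n−1)/log n) / log((n−1)/n). -/
/-!
With `c = log n` and `b = log (n - 1)`, the quantity is `log (b / c) / (b - c)`, and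
`b / c = 1 - x` for `x = (c - b) / c`. The bounds `x < -log (1 - x) < x + x ^ 2`, the upper one
from the Taylor series of `log (1 - x)` for `|x| ≤ 2/5`, turn into
`1 / c < log (b / c) / (b - c) < 1 / c + (c - b) / c ^ 2`. Finally
`c - b = log (n / (n - 1)) ≤ log (3 / 2) < 2 / 3`, and `x ≤ 2 / 5` because
`(3 / 2) ^ 5 ≤ 3 ^ 2`.
-/

open Real

theorem Real.neg_log_one_sub_lt_add_sq {x : ℝ} (hx : x ≠ 0) (h : |x| ≤ 2 / 5) :
    -log (1 - x) < x + x ^ 2 := by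
  have hseries := abs_log_sub_add_sum_range_le (h.trans_lt (by norm_num)) 3
  simp only [Finset.sum_range_succ, Finset.sum_range_zero] at hseries
  norm_num at hseries
  set t := |x|
  have ht : 0 < t := abs_pos.mpr hx
  have hx2 : x ^ 2 = t ^ 2 := (sq_abs x).symm
  have hx3 : x ^ 3 ≤ t ^ 3 := (le_abs_self _).trans (abs_pow x 3).le
  have htail : t ^ 4 / (1 - t) ≤ 5 / 3 * t ^ 4 := by
    rw [div_le_iff₀ (by linarith)]; nlinarith [pow_pos ht 4]
  -- the cubic and quartic terms of the series are absorbed by the missing half of `x ^ 2`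
  have hsmall : t ^ 3 / 3 + 5 / 3 * t ^ 4 < t ^ 2 / 2 := by nlinarith [pow_pos ht 2, pow_pos ht 3]
  linarith [(abs_le.mp hseries).1]

theorem Real.one_div_lt_log_div_div_sub {b c : ℝ} (hb : 0 < b) (hbc : b < c) :
    1 / c < log (b / c) / (b - c) := by
  have hc : 0 < c := hb.trans hbc
  have hlog := log_lt_sub_one_of_pos (div_pos hb hc) (div_lt_one hc |>.mpr hbc).ne
  rw [lt_div_iff_of_neg (sub_neg.mpr hbc)]
  calc log (b / c) < b / c - 1 := hlog
    _ = 1 / c * (b - c) := by field_simp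

theorem Real.log_div_div_sub_lt {b c : ℝ} (hc : 0 < c) (hbc : b < c) (h : c - b ≤ 2 / 5 * c) :
    log (b / c) / (b - c) < 1 / c + (c - b) / c ^ 2 := by
  set x := (c - b) / c with hx
  have hx0 : x ≠ 0 := div_ne_zero (sub_ne_zero.mpr hbc.ne') hc.ne'
  have hx25 : |x| ≤ 2 / 5 := by
    rw [abs_of_pos (div_pos (sub_pos.mpr hbc) hc), div_le_iff₀ hc]; exact h
  have hbx : b / c = 1 - x := by rw [hx]; field_simp; ring
  rw [div_lt_iff_of_neg (sub_neg.mpr hbc), hbx]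
  calc (1 / c + (c - b) / c ^ 2) * (b - c) = -(x + x ^ 2) := by rw [hx]; field_simp; ring
    _ < log (1 - x) := by linarith [neg_log_one_sub_lt_add_sq hx0 hx25]

/-- For every integer `n ≥ 3` one has
`1/log n < q_{n-1} < 1/log n + 2/(3 (log n)^2)`, where
`q_{n-1} = log(log(n-1)/log n) / log((n-1)/n)`. -/
theorem q_refined_bounds (n : ℕ) (hn : 3 ≤ n) :
    1 / Real.log n <
      Real.log (Real.log ((n : ℝ) - 1) / Real.log n) / Real.log (((n : ℝ) - 1) / n) ∧
    Real.log (Real.log ((n : ℝ) - 1) / Real.log n) / Real.log (((n : ℝ) - 1) / n) <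
      1 / Real.log n + 2 / (3 * (Real.log n) ^ 2) := by
  have hn3 : (3 : ℝ) ≤ n := by exact_mod_cast hn
  have hpos : 0 < log ((n : ℝ) - 1) := log_pos (by linarith)
  have hlt : log ((n : ℝ) - 1) < log n := log_lt_log (by linarith) (by linarith)
  have hden : log (((n : ℝ) - 1) / n) = log ((n : ℝ) - 1) - log n :=
    log_div (by linarith) (by linarith)
  have hgap : log n - log ((n : ℝ) - 1) ≤ log (3 / 2) := by
    rw [← log_div (by linarith) (by linarith)]
    exact log_le_log (div_pos (by linarith) (by linarith))
      ((div_le_iff₀ (by linarith)).mpr (by linarith))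
  have hlog32 : log (3 / 2) < 2 / 3 := by
    linarith [log_lt_sub_one_of_pos (by norm_num : (0 : ℝ) < 3 / 2) (by norm_num)]
  have hlog32_le : 5 * log (3 / 2) ≤ 2 * log n := by
    have h := log_le_log (by norm_num) (by norm_num : ((3 : ℝ) / 2) ^ 5 ≤ 3 ^ 2)
    rw [log_pow, log_pow] at h
    push_cast at h
    linarith [log_le_log (by norm_num) hn3]
  rw [hden]
  refine ⟨one_div_lt_log_div_div_sub hpos hlt,
    (log_div_div_sub_lt (hpos.trans hlt) hlt (by linarith)).trans_le ?_⟩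
  calc _ ≤ 1 / log n + 2 / 3 / log n ^ 2 := by gcongr; linarith
    _ = _ := by ring
end

section
/- Let M ≥ 3 and k ≥ 1 be integers. Then on the line σ = q_M·k, either Q_{M−1}^k or Q_M^k is the term of largest modulus of the Dirichlet series of ζ^(k): for every integer n ≥ 2, (log n)^k / n^{q_M·k} ≤ max( (log(M−1))^k / (M−1)^{q_M·k}, (log M)^k / M^{q_M·k} ). -/
set_option maxHeartbeats 1000000 in
/-- On the line `σ = q M * k`, either `Q_{M-1}^k` or `Q_M^k` is the term of largest
modulus of the Dirichlet series of the `k`-th derivative of the Riemann zeta function: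
for every `n ≥ 2`, `(log n)^k / n^(q M * k)` is bounded by the maximum of the
corresponding terms at `M-1` and `M`. -/
theorem term_max_on_critical_line (M : ℕ) (hM : 3 ≤ M) (k : ℕ) (hk : 1 ≤ k)
    (n : ℕ) (hn : 2 ≤ n) :
    (Real.log n) ^ k / (n : ℝ) ^ (q M * k) ≤
      max ((Real.log ((M : ℝ) - 1)) ^ k / ((M : ℝ) - 1) ^ (q M * k))
        ((Real.log M) ^ k / (M : ℝ) ^ (q M * k)) := by
  have hM3 : (3 : ℝ) ≤ (M : ℝ) := by exact_mod_cast hM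
  set a := Real.log (M : ℝ) with ha_def
  set b := Real.log ((M : ℝ) + 1) with hb_def
  have ha : 0 < a := Real.log_pos (by linarith)
  have hb : 0 < b := Real.log_pos (by linarith)
  have hab : a < b := Real.log_lt_log (by linarith) (by linarith)
  have hqeq : q M = (Real.log b - Real.log a) / (b - a) := by
    unfold q
    rw [Real.log_div ha.ne' hb.ne',
        Real.log_div (by linarith : (M : ℝ) ≠ 0) (by linarith : (M : ℝ) + 1 ≠ 0)]
    rw [show Real.log a - Real.log b = -(Real.log b - Real.log a) by ring,
        show a - b = -(b - a) by ring, neg_div_neg_eq]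
  have hk1 : (1 : ℝ) ≤ (k : ℝ) := by exact_mod_cast hk
  have hlogba : Real.log b - Real.log a ≤ b / a - 1 := by
    rw [← Real.log_div hb.ne' ha.ne']
    exact Real.log_le_sub_one_of_pos (by positivity)
  have hlogab : Real.log a - Real.log b ≤ a / b - 1 := by
    rw [← Real.log_div ha.ne' hb.ne']
    exact Real.log_le_sub_one_of_pos (by positivity)
  -- bounds on q M
  have hq1 : q M ≤ 1 / a := by
    rw [hqeq, div_le_div_iff₀ (by linarith) ha]
    have e1 : (b / a - 1) * a = b - a := by field_simp
    nlinarith [mul_le_mul_of_nonneg_right hlogba ha.le]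
  have hq2 : 1 / b ≤ q M := by
    rw [hqeq, div_le_div_iff₀ hb (by linarith)]
    have e1 : (a / b - 1) * b = a - b := by field_simp
    have h2 := mul_le_mul_of_nonneg_right hlogab hb.le
    nlinarith
  -- σ bounds
  have hσa : q M * (k : ℝ) * a ≤ (k : ℝ) := by
    have := mul_le_mul_of_nonneg_right hq1 (by positivity : (0:ℝ) ≤ (k:ℝ) * a)
    calc q M * (k:ℝ) * a = q M * ((k:ℝ) * a) := by ring
      _ ≤ 1 / a * ((k:ℝ) * a) := this
      _ = (k : ℝ) := by field_simp
  have hσb : (k : ℝ) ≤ q M * (k : ℝ) * b := by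
    have := mul_le_mul_of_nonneg_right hq2 (by positivity : (0:ℝ) ≤ (k:ℝ) * b)
    calc (k : ℝ) = 1 / b * ((k:ℝ) * b) := by field_simp
      _ ≤ q M * ((k:ℝ) * b) := this
      _ = q M * (k:ℝ) * b := by ring
  -- exponential form
  have form : ∀ x : ℝ, 1 < x →
      (Real.log x) ^ k / x ^ (q M * (k : ℝ)) =
        Real.exp ((k : ℝ) * Real.log (Real.log x) - q M * (k : ℝ) * Real.log x) := by
    intro x hx
    have hlx : 0 < Real.log x := Real.log_pos hx
    have h1 : Real.exp ((k : ℝ) * Real.log (Real.log x)) = (Real.log x) ^ k := by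
      rw [Real.exp_nat_mul, Real.exp_log hlx]
    have h2 : x ^ (q M * (k : ℝ)) = Real.exp (q M * (k : ℝ) * Real.log x) := by
      rw [Real.rpow_def_of_pos (by linarith), mul_comm]
    rw [← h1, h2, ← Real.exp_sub]
  have hn2 : (2 : ℝ) ≤ (n : ℝ) := by exact_mod_cast hn
  have hn1 : (1 : ℝ) < (n : ℝ) := by linarith
  set u := Real.log (n : ℝ) with hu_def
  have hu : 0 < u := Real.log_pos hn1
  rw [form (n : ℝ) hn1, form (M : ℝ) (by linarith)]
  refine le_trans ?_ (le_max_right _ _)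
  rcases le_or_gt n M with hnM | hnM
  · -- increasing part: n ≤ M
    have huv : u ≤ a := Real.log_le_log (by linarith) (by exact_mod_cast hnM)
    apply Real.exp_le_exp.mpr
    have hlog : Real.log u - Real.log a ≤ u / a - 1 := by
      rw [← Real.log_div hu.ne' ha.ne']
      exact Real.log_le_sub_one_of_pos (by positivity)
    have hlog' : (Real.log u - Real.log a) * a ≤ u - a := by
      have := mul_le_mul_of_nonneg_right hlog ha.le
      have e : (u / a - 1) * a = u - a := by field_simp
      linarith
    have hA : ((k : ℝ) - q M * (k : ℝ) * a) * (u - a) ≤ 0 :=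
      mul_nonpos_of_nonneg_of_nonpos (by linarith) (by linarith)
    nlinarith [mul_le_mul_of_nonneg_left hlog' (by positivity : (0:ℝ) ≤ (k:ℝ)), ha, hA,
      mul_pos ha hu]
  · -- decreasing part: n ≥ M + 1
    have hMn : (M : ℝ) + 1 ≤ (n : ℝ) := by
      have : (M + 1 : ℕ) ≤ n := hnM
      exact_mod_cast this
    have hbu : b ≤ u := Real.log_le_log (by linarith) hMn
    have key_eq : (k : ℝ) * Real.log a - q M * (k : ℝ) * a =
        (k : ℝ) * Real.log b - q M * (k : ℝ) * b := by
      have hne : b - a ≠ 0 := by linarith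
      have h0 : q M * (b - a) = Real.log b - Real.log a := by
        rw [hqeq]; exact div_mul_cancel₀ _ hne
      linear_combination (k : ℝ) * h0
    rw [key_eq]
    apply Real.exp_le_exp.mpr
    have hlog : Real.log u - Real.log b ≤ u / b - 1 := by
      rw [← Real.log_div hu.ne' hb.ne']
      exact Real.log_le_sub_one_of_pos (by positivity)
    have hlog' : (Real.log u - Real.log b) * b ≤ u - b := by
      have := mul_le_mul_of_nonneg_right hlog hb.le
      have e : (u / b - 1) * b = u - b := by field_simp
      linarith
    have h1 := mul_le_mul_of_nonneg_left hlog' (by positivity : (0:ℝ) ≤ (k:ℝ))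
    have h2 := mul_le_mul_of_nonneg_right hσb (by linarith : (0:ℝ) ≤ u - b)
    have h4 : ((k : ℝ) * (Real.log u - Real.log b) - q M * (k : ℝ) * (u - b)) * b ≤ 0 * b := by
      nlinarith [h1, h2]
    have h5 := le_of_mul_le_mul_right h4 hb
    linarith
end

section
/- Let M ≥ 2 be an integer, and let a₁, b₁ be real numbers and k₀ ≥ 1 a real number satisfying: (i) a₁ > 1/log M; (ii) (a₁·log M − 1)·k₀ + 1 + (b₁ − 1)·log M > 0; and (iii) in case b₁ < 1 − 1/log M, also k₀ ≥ (1/(a₁·log M))·( −(b₁−1)·log M − 1 + √( |(b₁−1)·log M + 1| / (a₁·log M − 1) ) ). Then for all real k with k₀ ≤ k and all real σ with a₁·k + b₁ ≤ σ, one has R_M^k(σ) ≤ R_M^k(a₁·k + b₁) ≤ R_M^{k₀}(a₁·k₀ + b₁), where R_M^k(σ) := (M/(σ−1))·(1 + k/((σ−1)·log M − k + 1)). -/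
/-- `R M k σ = (M/(σ-1)) (1 + k/((σ-1) log M - k + 1))`, the bound on the tail
`T_M^k(σ)` of the Dirichlet series of the `k`-th derivative of the zeta function. -/
noncomputable def R (M : ℕ) (k σ : ℝ) : ℝ :=
  ((M : ℝ) / (σ - 1)) * (1 + k / ((σ - 1) * Real.log M - k + 1))

lemma R_eq (M : ℕ) (k σ : ℝ) (hv : σ - 1 ≠ 0)
    (hd : (σ - 1) * Real.log M - k + 1 ≠ 0) :
    R M k σ = (M : ℝ) * ((σ - 1) * Real.log M + 1) /
      ((σ - 1) * ((σ - 1) * Real.log M - k + 1)) := by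
  rw [R, add_div' _ _ _ hd, div_mul_div_comm]
  congr 1
  ring

set_option maxHeartbeats 1000000 in
/-- Monotonicity of the tail bound `R_M^k(σ)`: under the stated conditions on `a₁`, `b₁`
and `k₀`, for `k ≥ k₀` and `σ ≥ a₁ k + b₁` one has
`R_M^k(σ) ≤ R_M^k(a₁ k + b₁) ≤ R_M^{k₀}(a₁ k₀ + b₁)`. -/
theorem R_monotone (M : ℕ) (hM : 2 ≤ M) (a₁ b₁ k₀ : ℝ) (hk₀ : 1 ≤ k₀)
    (ha : 1 / Real.log M < a₁)
    (hpos : 0 < (a₁ * Real.log M - 1) * k₀ + 1 + (b₁ - 1) * Real.log M)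
    (hcase : b₁ < 1 - 1 / Real.log M →
      (1 / (a₁ * Real.log M)) *
        (-(b₁ - 1) * Real.log M - 1 +
          Real.sqrt (|(b₁ - 1) * Real.log M + 1| / (a₁ * Real.log M - 1))) ≤ k₀)
    (k : ℝ) (hk : k₀ ≤ k) (σ : ℝ) (hσ : a₁ * k + b₁ ≤ σ) :
    R M k σ ≤ R M k (a₁ * k + b₁) ∧
    R M k (a₁ * k + b₁) ≤ R M k₀ (a₁ * k₀ + b₁) := by
  set L := Real.log M with hLdef
  have hM1 : (1 : ℝ) < M := by exact_mod_cast (by omega : 1 < M)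
  have hM0 : (0 : ℝ) ≤ M := by positivity
  have hL0 : 0 < L := Real.log_pos hM1
  have hcL : 1 < a₁ * L := by
    have := (div_lt_iff₀ hL0).mp ha
    linarith
  have ha0 : 0 < a₁ := lt_trans (by positivity) ha
  -- t = k - k₀ ≥ 0
  have ht : 0 ≤ k - k₀ := by linarith
  -- D₀ > 0
  have hD0 : 0 < (a₁ * L - 1) * k₀ + (b₁ - 1) * L + 1 := by linarith
  -- Dk > 0
  have hDk : 0 < (a₁ * L - 1) * k + (b₁ - 1) * L + 1 := by
    nlinarith [mul_nonneg (sub_nonneg.mpr hcL.le) ht]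
  -- u₀ = a₁ k₀ + b₁ - 1 > 0
  have hu0 : 0 < a₁ * k₀ + b₁ - 1 := by
    have h1 : 0 < L * (a₁ * k₀ + b₁ - 1) := by nlinarith
    nlinarith
  -- u = a₁ k + b₁ - 1 > 0
  have hu : 0 < a₁ * k + b₁ - 1 := by
    have h1 : 0 < L * (a₁ * k + b₁ - 1) := by nlinarith
    nlinarith
  -- s = σ - (a₁ k + b₁) ≥ 0
  have hs : 0 ≤ σ - (a₁ * k + b₁) := by linarith
  have hv : 0 < σ - 1 := by linarith
  -- denominators at σ₀ = a₁ k + b₁ and at σ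
  have hdk : (a₁ * k + b₁ - 1) * L - k + 1 = (a₁ * L - 1) * k + (b₁ - 1) * L + 1 := by ring
  have hd0' : 0 < (a₁ * k + b₁ - 1) * L - k + 1 := by rw [hdk]; exact hDk
  have hd : 0 < (σ - 1) * L - k + 1 := by
    nlinarith [mul_nonneg hL0.le hs]
  have hdk0 : (a₁ * k₀ + b₁ - 1) * L - k₀ + 1 = (a₁ * L - 1) * k₀ + (b₁ - 1) * L + 1 := by ring
  have hd0'' : 0 < (a₁ * k₀ + b₁ - 1) * L - k₀ + 1 := by rw [hdk0]; exact hD0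
  constructor
  · -- R M k σ ≤ R M k (a₁ k + b₁)
    rw [R_eq M k σ (ne_of_gt hv) (ne_of_gt hd),
        R_eq M k (a₁ * k + b₁) (by exact ne_of_gt hu) (by exact ne_of_gt hd0')]
    rw [div_le_div_iff₀ (by positivity) (by positivity)]
    have key : ((σ - 1) * L + 1) * ((a₁ * k + b₁ - 1) * ((a₁ * k + b₁ - 1) * L - k + 1)) ≤
        ((a₁ * k + b₁ - 1) * L + 1) * ((σ - 1) * ((σ - 1) * L - k + 1)) := by
      nlinarith [mul_nonneg hs (mul_nonneg (mul_nonneg hL0.le hu.le)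
          (by nlinarith : (0:ℝ) ≤ (a₁ * k + b₁ - 1) * L + 1)),
        mul_nonneg hs hd0'.le,
        mul_nonneg (mul_nonneg hs hs) (mul_nonneg hL0.le
          (by nlinarith : (0:ℝ) ≤ (a₁ * k + b₁ - 1) * L + 1))]
    rw [mul_assoc, mul_assoc]
    exact mul_le_mul_of_nonneg_left key hM0
  · -- R M k (a₁ k + b₁) ≤ R M k₀ (a₁ k₀ + b₁)
    rw [R_eq M k (a₁ * k + b₁) (by exact ne_of_gt hu) (by exact ne_of_gt hd0'),
        R_eq M k₀ (a₁ * k₀ + b₁) (by exact ne_of_gt hu0) (by exact ne_of_gt hd0'')]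
    rw [div_le_div_iff₀ (by positivity) (by positivity)]
    have hLu0 : (0:ℝ) ≤ (a₁ * k₀ + b₁ - 1) * L + 1 := by
      linarith [mul_nonneg hu0.le hL0.le]
    have key : ((a₁ * k + b₁ - 1) * L + 1) *
          ((a₁ * k₀ + b₁ - 1) * ((a₁ * k₀ + b₁ - 1) * L - k₀ + 1)) ≤
        ((a₁ * k₀ + b₁ - 1) * L + 1) *
          ((a₁ * k + b₁ - 1) * ((a₁ * k + b₁ - 1) * L - k + 1)) := by
      nlinarith [mul_nonneg ht (mul_nonneg (mul_nonneg hLu0 hu0.le)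
          (sub_nonneg.mpr hcL.le)),
        mul_nonneg ht (mul_nonneg ha0.le hd0''.le),
        mul_nonneg (mul_nonneg ht ht)
          (mul_nonneg (mul_nonneg hLu0 ha0.le) (sub_nonneg.mpr hcL.le))]
    rw [mul_assoc, mul_assoc]
    exact mul_le_mul_of_nonneg_left key hM0
end

section
/- Let c, d be real numbers with 0 < c ≤ d. Then the function y(x) = (x/(x+1))^{c·x + d} is strictly increasing on (0, ∞), and y(x) tends to e^{−c} as x → ∞. -/
/-!
Write `y = exp g` with `g x = (c x + d) log (x / (x + 1))`. Since `log (x / (x + 1)) > -1/x`,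
`g' x = c log (x / (x + 1)) + (c x + d) / (x (x + 1)) > -c/x + c (x + 1) / (x (x + 1)) = 0`,
using `d ≥ c`; and `g x = (c + d/x) · x log (x / (x + 1)) → c · (-1)`.
-/

open Real Set Filter Topology

namespace Real

lemma neg_inv_lt_log_div_add_one {x : ℝ} (hx : 0 < x) : -x⁻¹ < log (x / (x + 1)) := by
  have hlog : log (1 + x⁻¹) < x⁻¹ := by
    simpa using log_lt_sub_one_of_pos (by positivity : 0 < 1 + x⁻¹) (by simp [hx.ne'])
  have hinv : x / (x + 1) = (1 + x⁻¹)⁻¹ := by field_simp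
  rw [hinv, log_inv]
  linarith

lemma hasDerivAt_log_div_add_one {x : ℝ} (hx : 0 < x) :
    HasDerivAt (fun t => log (t / (t + 1))) (x * (x + 1))⁻¹ x := by
  have hx1 : x + 1 ≠ 0 := by positivity
  have h := ((hasDerivAt_id' x).fun_div ((hasDerivAt_id' x).add_const 1) hx1).log
    (div_ne_zero hx.ne' hx1)
  convert h using 1
  field_simp
  ring

lemma tendsto_mul_log_div_add_one_atTop :
    Tendsto (fun x => x * log (x / (x + 1))) atTop (𝓝 (-1)) := by
  refine (tendsto_mul_log_one_add_div_atTop 1).neg.congr' ?_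
  filter_upwards [eventually_gt_atTop 0] with x hx
  have hinv : x / (x + 1) = (1 + 1 / x)⁻¹ := by field_simp
  rw [hinv, log_inv, mul_neg]

end Real

lemma hasDerivAt_affine_mul_log_div_add_one (c d : ℝ) {x : ℝ} (hx : 0 < x) :
    HasDerivAt (fun t => (c * t + d) * log (t / (t + 1)))
      (c * log (x / (x + 1)) + (c * x + d) * (x * (x + 1))⁻¹) x := by
  simpa using (((hasDerivAt_id' x).const_mul c).add_const d).fun_mul
    (hasDerivAt_log_div_add_one hx)

lemma deriv_affine_mul_log_div_add_one_pos {c d : ℝ} (hc : 0 < c) (hcd : c ≤ d) {x : ℝ} (hx : 0 < x) :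
    0 < c * log (x / (x + 1)) + (c * x + d) * (x * (x + 1))⁻¹ := by
  calc (0 : ℝ) = c * -x⁻¹ + (c * x + c) * (x * (x + 1))⁻¹ := by field_simp; ring
    _ < c * log (x / (x + 1)) + (c * x + d) * (x * (x + 1))⁻¹ := by
      refine add_lt_add_of_lt_of_le ?_ ?_
      · exact mul_lt_mul_of_pos_left (neg_inv_lt_log_div_add_one hx) hc
      · gcongr

lemma strictMonoOn_affine_mul_log_div_add_one {c d : ℝ} (hc : 0 < c) (hcd : c ≤ d) :
    StrictMonoOn (fun x => (c * x + d) * log (x / (x + 1))) (Ioi 0) := by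
  refine strictMonoOn_of_deriv_pos (convex_Ioi 0) (fun x hx => ?_) (fun x hx => ?_)
  · exact (hasDerivAt_affine_mul_log_div_add_one c d hx).continuousAt.continuousWithinAt
  · rw [interior_Ioi] at hx
    rw [(hasDerivAt_affine_mul_log_div_add_one c d hx).deriv]
    exact deriv_affine_mul_log_div_add_one_pos hc hcd hx

lemma tendsto_affine_mul_log_div_add_one (c d : ℝ) :
    Tendsto (fun x => (c * x + d) * log (x / (x + 1))) atTop (𝓝 (-c)) := by
  have hcoeff : Tendsto (fun x : ℝ => c + d * x⁻¹) atTop (𝓝 c) := by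
    simpa using tendsto_const_nhds.add (tendsto_inv_atTop_zero.const_mul d)
  have hlim : Tendsto (fun x => (c + d * x⁻¹) * (x * log (x / (x + 1)))) atTop (𝓝 (-c)) := by
    simpa using hcoeff.mul tendsto_mul_log_div_add_one_atTop
  refine hlim.congr' ?_
  filter_upwards [eventually_gt_atTop 0] with x hx
  field_simp

/-- For `0 < c ≤ d`, the function `y(x) = (x/(x+1))^(c x + d)` is strictly increasing on
`(0, ∞)` and tends to `e^{-c}` as `x → ∞`. -/
theorem pow_ratio_strictMono_and_tendsto (c d : ℝ) (hc : 0 < c) (hcd : c ≤ d) :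
    StrictMonoOn (fun x : ℝ => (x / (x + 1)) ^ (c * x + d)) (Set.Ioi (0 : ℝ)) ∧
    Filter.Tendsto (fun x : ℝ => (x / (x + 1)) ^ (c * x + d)) Filter.atTop
      (nhds (Real.exp (-c))) := by
  have hexp : ∀ x ∈ Ioi (0 : ℝ),
      (x / (x + 1)) ^ (c * x + d) = exp ((c * x + d) * log (x / (x + 1))) := fun x hx => by
    rw [rpow_def_of_pos (div_pos hx (by linarith [mem_Ioi.mp hx])), mul_comm]
  constructor
  · intro a ha b hb hab
    simp only [hexp a ha, hexp b hb, exp_lt_exp]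
    exact strictMonoOn_affine_mul_log_div_add_one hc hcd ha hb hab
  · refine ((continuous_exp.tendsto _).comp (tendsto_affine_mul_log_div_add_one c d)).congr' ?_
    filter_upwards [eventually_gt_atTop 0] with x hx
    exact (hexp x hx).symm
end

section
/- For every integer m ≥ 3 one has q_{m−1} > q_m, and the tip k_m := (2m+1)·log 3 / (q_{m−1} − q_m) of the m-th wedge satisfies (1/2)·log 3 · m^2 · (log m)^2 < k_m < 6·log 3 · m^2 · (log m)^2. -/
open Real

namespace Real

lemma log_le_sub_inv_div_two {t : ℝ} (ht : 1 ≤ t) : log t ≤ (t - t⁻¹) / 2 :=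
  (self_le_sinh_iff.2 (log_nonneg ht)).trans_eq (sinh_log (by linarith))

lemma two_mul_sub_div_add_le_log_div {x y : ℝ} (hx : 0 < x) (hxy : x ≤ y) :
    2 * (y - x) / (x + y) ≤ log (y / x) := by
  convert le_log_one_add_of_nonneg (x := y / x - 1) (sub_nonneg.2 ((one_le_div hx).2 hxy)) using 1
  · field_simp; ring
  · ring_nf

lemma log_div_le_sub_mul_add_div {x y : ℝ} (hx : 0 < x) (hxy : x ≤ y) :
    log (y / x) ≤ (y - x) * (x + y) / (2 * x * y) := by
  convert log_le_sub_inv_div_two ((one_le_div hx).2 hxy) using 1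
  field_simp; ring

lemma two_div_add_le_log_div_div_sub {x y : ℝ} (hx : 0 < x) (hxy : x < y) :
    2 / (x + y) ≤ log (y / x) / (y - x) := by
  rw [le_div_iff₀ (sub_pos.2 hxy), div_mul_eq_mul_div]
  exact two_mul_sub_div_add_le_log_div hx hxy.le

lemma log_div_div_sub_le {x y : ℝ} (hx : 0 < x) (hxy : x < y) :
    log (y / x) / (y - x) ≤ (x + y) / (2 * x * y) := by
  rw [div_le_iff₀ (sub_pos.2 hxy), div_mul_eq_mul_div, mul_comm]
  exact log_div_le_sub_mul_add_div hx hxy.le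

lemma log_add_one_le_two_mul_log {x : ℝ} (hx : 2 ≤ x) : log (x + 1) ≤ 2 * log x := by
  calc log (x + 1) ≤ log (x ^ 2) := log_le_log (by linarith) (by nlinarith)
    _ = 2 * log x := by rw [log_pow, Nat.cast_ofNat]

lemma two_div_le_log_add_one_sub_log_sub_one {x : ℝ} (hx : 1 < x) :
    2 / x ≤ log (x + 1) - log (x - 1) := by
  rw [← log_div (by linarith) (by linarith)]
  convert two_mul_sub_div_add_le_log_div (sub_pos.2 hx) (by linarith : x - 1 ≤ x + 1) using 1
  ring

lemma log_add_one_sub_log_sub_one_le {x : ℝ} (hx : 1 < x) :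
    log (x + 1) - log (x - 1) ≤ 2 / (x - 1) := by
  rw [← log_div (by linarith) (by linarith)]
  convert log_le_sub_one_of_pos (x := (x + 1) / (x - 1)) (by apply div_pos <;> linarith) using 1
  field_simp [(sub_pos.2 hx).ne']; ring

end Real

lemma q_eq {M : ℕ} (hM : 2 ≤ M) :
    q M = log (log (M + 1) / log M) / (log (M + 1) - log M) := by
  have hM1 : (1 : ℝ) < M := by exact_mod_cast hM
  have ha : 0 < log (M : ℝ) := log_pos hM1
  have hb : 0 < log ((M : ℝ) + 1) := log_pos (by linarith)
  rw [q, log_div ha.ne' hb.ne', log_div (by positivity) (by positivity), log_div hb.ne' ha.ne',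
    ← neg_sub (log (log _)), ← neg_sub (log ((M : ℝ) + 1)), neg_div_neg_eq]

lemma q_mem_Icc {M : ℕ} (hM : 2 ≤ M) :
    q M ∈ Set.Icc (2 / (log M + log (M + 1)))
      ((log M + log (M + 1)) / (2 * log M * log (M + 1))) := by
  have hM1 : (1 : ℝ) < M := by exact_mod_cast hM
  have ha : 0 < log (M : ℝ) := log_pos hM1
  have hab : log (M : ℝ) < log (M + 1) := log_lt_log (by linarith) (by linarith)
  rw [q_eq hM]
  exact ⟨two_div_add_le_log_div_div_sub ha hab, log_div_div_sub_le ha hab⟩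

lemma q_sub_q_mem_Icc {m : ℕ} (hm : 3 ≤ m) :
    q (m - 1) - q m ∈ Set.Icc (1 / (m * log m * log (m + 1)))
      (1 / ((m - 1) * log (m - 1) * log m)) := by
  have hm3 : (3 : ℝ) ≤ m := by exact_mod_cast hm
  have hq₁ := q_mem_Icc (M := m - 1) (by omega)
  have hq₂ := q_mem_Icc (M := m) (by omega)
  rw [Nat.cast_pred (by omega), sub_add_cancel] at hq₁
  set a := log ((m : ℝ) - 1)
  set b := log (m : ℝ)
  set c := log ((m : ℝ) + 1)
  have ha : 0 < a := log_pos (by linarith)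
  have hab : a ≤ b := log_le_log (by linarith) (by linarith)
  have hbc : b ≤ c := log_le_log (by linarith) (by linarith)
  have hb : 0 < b := ha.trans_le hab
  have hc : 0 < c := hb.trans_le hbc
  constructor
  · calc 1 / (m * b * c) = (2 / m) / (2 * b * c) := by field_simp
      _ ≤ (c - a) / (2 * b * c) := by
        gcongr; exact two_div_le_log_add_one_sub_log_sub_one (by linarith)
      _ ≤ 2 / (a + b) - (b + c) / (2 * b * c) := by
        rw [le_sub_iff_add_le, ← add_div, div_le_div_iff₀ (by positivity) (by positivity)]
        nlinarith [mul_nonneg (sub_nonneg.2 hab) (by linarith : (0:ℝ) ≤ 2 * c - a - b)]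
      _ ≤ q (m - 1) - q m := by linarith [hq₁.1, hq₂.2]
  · calc q (m - 1) - q m ≤ (a + b) / (2 * a * b) - 2 / (b + c) := by linarith [hq₁.2, hq₂.1]
      _ ≤ (c - a) / (2 * a * b) := by
        rw [sub_le_comm, ← sub_div, div_le_div_iff₀ (by positivity) (by positivity)]
        nlinarith [mul_nonneg (sub_nonneg.2 hbc) (by linarith : (0:ℝ) ≤ b + c - 2 * a)]
      _ ≤ (2 / (m - 1)) / (2 * a * b) := by
        gcongr; exact log_add_one_sub_log_sub_one_le (by linarith)
      _ = 1 / ((m - 1) * a * b) := by field_simp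

/-- For every `m ≥ 3` one has `q (m-1) > q m`, and the tip
`k_m = (2m+1) log 3 / (q (m-1) - q m)` of the `m`-th wedge satisfies
`(1/2) log 3 · m² (log m)² < k_m < 6 log 3 · m² (log m)²`. -/
theorem wedge_tip_bounds (m : ℕ) (hm : 3 ≤ m) :
    q m < q (m - 1) ∧
    (1 / 2) * Real.log 3 * (m : ℝ) ^ 2 * (Real.log m) ^ 2 <
      (2 * (m : ℝ) + 1) * Real.log 3 / (q (m - 1) - q m) ∧
    (2 * (m : ℝ) + 1) * Real.log 3 / (q (m - 1) - q m) <
      6 * Real.log 3 * (m : ℝ) ^ 2 * (Real.log m) ^ 2 := by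
  have hm3 : (3 : ℝ) ≤ m := by exact_mod_cast hm
  obtain ⟨hΔ_ge, hΔ_le⟩ := q_sub_q_mem_Icc hm
  have hb_le : log m ≤ 2 * log ((m : ℝ) - 1) := by
    simpa using log_add_one_le_two_mul_log (x := (m : ℝ) - 1) (by linarith)
  have hc_le : log ((m : ℝ) + 1) ≤ 2 * log m := log_add_one_le_two_mul_log (by linarith)
  have ha : 0 < log ((m : ℝ) - 1) := log_pos (by linarith)
  have hb : 0 < log (m : ℝ) := log_pos (by linarith)
  have hc : 0 < log ((m : ℝ) + 1) := log_pos (by linarith)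
  have hm1 : (0 : ℝ) < m - 1 := by linarith
  have hΔ : 0 < q (m - 1) - q m := lt_of_lt_of_le (by positivity) hΔ_ge
  refine ⟨sub_pos.1 hΔ, ?_, ?_⟩
  · calc (1 / 2) * log 3 * (m : ℝ) ^ 2 * (log m) ^ 2
        < (1 / 2) * log 3 * ((2 * m + 1) * (m - 1)) * (log m) ^ 2 := by gcongr; nlinarith
      _ = (2 * m + 1) * log 3 * ((m - 1) * (log m / 2) * log m) := by ring
      _ ≤ (2 * m + 1) * log 3 * ((m - 1) * log ((m : ℝ) - 1) * log m) := by gcongr; linarith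
      _ = (2 * m + 1) * log 3 / (1 / ((m - 1) * log ((m : ℝ) - 1) * log m)) := by
          rw [one_div, div_inv_eq_mul]
      _ ≤ (2 * m + 1) * log 3 / (q (m - 1) - q m) := by gcongr
  · calc (2 * m + 1) * log 3 / (q (m - 1) - q m)
        ≤ (2 * m + 1) * log 3 / (1 / (m * log m * log (m + 1))) := by gcongr
      _ = (2 * m + 1) * log 3 * (m * log m * log (m + 1)) := by rw [one_div, div_inv_eq_mul]
      _ ≤ (2 * m + 1) * log 3 * (m * log m * (2 * log m)) := by gcongr
      _ < 6 * log 3 * (m : ℝ) ^ 2 * (log m) ^ 2 := by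
          have : 0 < log 3 * (m : ℝ) * log m ^ 2 := by positivity
          nlinarith
end

section
/- Let M ≥ 2 and k ≥ 1 be integers. A complex number s satisfies (log M)^k · M^{−s} + (log(M+1))^k · (M+1)^{−s} = 0 if and only if there exists an integer j such that s = q_M·k + i·(2j+1)·π/(log(M+1) − log M). In particular, all zeros of Q_M^k(s) + Q_{M+1}^k(s) lie on the critical line Re(s) = q_M·k and are spaced periodically with period 2π/(log(M+1) − log M). -/
/-- A complex number `s` satisfies `(log M)^k M^{-s} + (log(M+1))^k (M+1)^{-s} = 0` if
and only if `s = q M * k + i (2j+1) π / (log(M+1) - log M)` for some integer `j`.  In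
particular all zeros of `Q_M^k + Q_{M+1}^k` lie on the critical line `Re s = q M * k`
and are spaced periodically with period `2π/(log(M+1) - log M)`. -/
theorem two_term_zeros (M k : ℕ) (hM : 2 ≤ M) (hk : 1 ≤ k) (s : ℂ) :
    ((Real.log M : ℂ)) ^ k * (M : ℂ) ^ (-s) +
      ((Real.log ((M : ℝ) + 1) : ℂ)) ^ k * ((M : ℂ) + 1) ^ (-s) = 0 ↔
    ∃ j : ℤ, s = ((q M * k : ℝ) : ℂ) +
      Complex.I * (((2 * (j : ℝ) + 1) * Real.pi /
        (Real.log ((M : ℝ) + 1) - Real.log M) : ℝ) : ℂ) := by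
  have hM1 : (1:ℝ) < (M:ℝ) := by exact_mod_cast Nat.lt_of_lt_of_le Nat.one_lt_two hM
  set a := Real.log (M:ℝ) with ha_def
  set b := Real.log ((M:ℝ)+1) with hb_def
  have ha : 0 < a := Real.log_pos hM1
  have hb : 0 < b := Real.log_pos (by linarith)
  have hab : a < b := Real.log_lt_log (by linarith) (by linarith)
  have hba : (0:ℝ) < b - a := by linarith
  have hMpos : (0:ℝ) < (M:ℝ) := by linarith
  have hane : (a:ℂ) ≠ 0 := by exact_mod_cast ha.ne'
  have hbane : ((b:ℂ) - (a:ℂ)) ≠ 0 := by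
    rw [show ((b:ℂ) - (a:ℂ)) = ((b - a : ℝ) : ℂ) by push_cast; ring]
    exact_mod_cast hba.ne'
  -- rewrite the powers as exponentials
  have h1 : (M : ℂ) ^ (-s) = Complex.exp ((a:ℂ) * (-s)) := by
    rw [Complex.cpow_def_of_ne_zero (by exact_mod_cast hMpos.ne'),
      show (M:ℂ) = ((M:ℝ):ℂ) by push_cast; ring, ← Complex.ofReal_log hMpos.le]
  have h2 : ((M : ℂ) + 1) ^ (-s) = Complex.exp ((b:ℂ) * (-s)) := by
    rw [show (M:ℂ) + 1 = Complex.ofReal ((M:ℝ) + 1) by push_cast; ring,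
      Complex.cpow_def_of_ne_zero (by
        rw [Complex.ofReal_ne_zero]; intro h; linarith),
      ← Complex.ofReal_log (by linarith : (0:ℝ) ≤ (M:ℝ)+1)]
  -- identify q M * k
  have hqk : q M * (k:ℝ) = (k:ℝ) * Real.log (b/a) / (b - a) := by
    have hMM : Real.log ((M:ℝ)/((M:ℝ)+1)) = a - b :=
      Real.log_div (by linarith) (by linarith)
    rw [q, hMM, show Real.log (a/b) = -(Real.log (b/a)) by
        rw [← Real.log_inv]; congr 1; field_simp,
      show a - b = -(b-a) by ring, neg_div_neg_eq]
    ring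
  -- main exponential identity
  have hrhs : Complex.exp ((((k:ℝ)*Real.log (b/a) : ℝ):ℂ) + (Real.pi:ℂ)*Complex.I)
      = -((b:ℂ)^k / (a:ℂ)^k) := by
    rw [Complex.exp_add, Complex.exp_pi_mul_I, ← Complex.ofReal_exp,
      Real.exp_nat_mul, Real.exp_log (by positivity)]
    push_cast
    ring
  have hlhs : Complex.exp (s*((b:ℂ)-(a:ℂ)))
      = Complex.exp ((a:ℂ)*(-s)) / Complex.exp ((b:ℂ)*(-s)) := by
    rw [← Complex.exp_sub]; congr 1; ring
  have hak : (a:ℂ)^k ≠ 0 := pow_ne_zero _ hane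
  have key : ((a:ℂ)^k * Complex.exp ((a:ℂ)*(-s)) + (b:ℂ)^k * Complex.exp ((b:ℂ)*(-s)) = 0)
      ↔ Complex.exp (s*((b:ℂ)-(a:ℂ)))
        = Complex.exp ((((k:ℝ)*Real.log (b/a) : ℝ):ℂ) + (Real.pi:ℂ)*Complex.I) := by
    rw [hrhs, hlhs, div_eq_iff (Complex.exp_ne_zero _)]
    generalize Complex.exp ((a:ℂ)*(-s)) = E1
    generalize Complex.exp ((b:ℂ)*(-s)) = E2
    constructor
    · intro h
      field_simp
      linear_combination h
    · intro h
      field_simp at h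
      linear_combination h
  rw [h1, h2, key, Complex.exp_eq_exp_iff_exists_int]
  -- translate the parametrization
  have hform : ∀ n : ℤ, (((q M * (k:ℕ) : ℝ):ℂ) +
      Complex.I * (((2*(n:ℝ)+1)*Real.pi/(b-a) : ℝ):ℂ)) * ((b:ℂ)-(a:ℂ))
      = (((k:ℝ)*Real.log (b/a) : ℝ):ℂ) + (Real.pi:ℂ)*Complex.I + n*(2*(Real.pi:ℂ)*Complex.I) := by
    intro n
    have h0 : ((q M * (k:ℕ) : ℝ):ℂ) = (((k:ℝ) * Real.log (b/a) / (b - a) : ℝ):ℂ) := by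
      rw [hqk]
    rw [h0]
    push_cast
    field_simp
    ring
  constructor
  · rintro ⟨n, hn⟩
    refine ⟨n, mul_right_cancel₀ hbane ?_⟩
    rw [hn, hform n]
  · rintro ⟨j, hj⟩
    exact ⟨j, by rw [hj, hform j]⟩
end
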